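/- Let j₀, k₀ ∈ ℤ and s < β. Suppose a family G_{j,k} of functions on ℝⁿ×ℝ^m satisfies ‖G_{jk}‖_{L^∞} ≤ A 2^{−(j+k)s}, ‖G_{jk}‖_{(L^∞,λ^β)} ≤ A 2^{−js}2^{k(β−s)}, ‖G_{jk}‖_{(λ^β,L^∞)} ≤ A 2^{j(β−s)}2^{−ks}, and ‖G_{jk}‖_β ≤ A 2^{(j+k)(β−s)}. Then for any points with 2^{−j₀} ≤ |x₁−y₁| ≤ 2^{−j₀+1} and 2^{−k₀} ≤ |x₂−y₂| ≤ 2^{−k₀+1}, the double difference of Σ_{j,k} G_{jk} satisfies |Σ_{j,k}[G_{jk}(x₁,x₂)−G_{jk}(y₁,x₂)−G_{jk}(x₁,y₂)+G_{jk}(y₁,y₂)]| ≤ C·A·|x₁−y₁|^s|x₂−y₂|^s, with C depending only on s, β. -/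

import Mathlib

open MeasureTheory

noncomputable abbrev E (n : ℕ) := EuclideanSpace ℝ (Fin n)

/-!
In each of the four regions `j ≷ j₀`, `k ≷ k₀` one of the four hypotheses bounds the `(j, k)`
double difference by `A * a j * b k`, where `a j = 2 * 2^{-js}` for `j ≥ j₀` (size bound) and
`a j = 2^{j(β-s)} |x₁ - y₁|^β` for `j < j₀` (Hölder bound), and similarly for `b`. The bound
factors, so the double series is at most `A (∑ a) (∑ b)`. Each factor is a pair of geometric
series dominated by its terms at `j₀`, which are both of size `|x₁ - y₁|^s` since
`|x₁ - y₁| ≈ 2^{-j₀}`.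
-/

section DoubleDifference

variable {X Y F : Type*} [AddCommGroup F]

def doubleDiff (f : X × Y → F) (x₁ y₁ : X) (x₂ y₂ : Y) : F :=
  f (x₁, x₂) - f (y₁, x₂) - f (x₁, y₂) + f (y₁, y₂)

lemma doubleDiff_eq_sub_snd (f : X × Y → F) (x₁ y₁ : X) (x₂ y₂ : Y) :
    doubleDiff f x₁ y₁ x₂ y₂ = (f (x₁, x₂) - f (x₁, y₂)) - (f (y₁, x₂) - f (y₁, y₂)) := by
  unfold doubleDiff; abel

lemma doubleDiff_eq_sub_fst (f : X × Y → F) (x₁ y₁ : X) (x₂ y₂ : Y) :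
    doubleDiff f x₁ y₁ x₂ y₂ = (f (x₁, x₂) - f (y₁, x₂)) - (f (x₁, y₂) - f (y₁, y₂)) := by
  unfold doubleDiff; abel

end DoubleDifference

section NormDoubleDifference

variable {X Y F : Type*} [SeminormedAddCommGroup F] {f : X × Y → F} {M : ℝ}

lemma norm_doubleDiff_le_of_norm_le (h : ∀ z, ‖f z‖ ≤ M) (x₁ y₁ : X) (x₂ y₂ : Y) :
    ‖doubleDiff f x₁ y₁ x₂ y₂‖ ≤ 4 * M := by
  unfold doubleDiff
  linarith [norm_add_le (f (x₁, x₂) - f (y₁, x₂) - f (x₁, y₂)) (f (y₁, y₂)),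
    norm_sub_le (f (x₁, x₂) - f (y₁, x₂)) (f (x₁, y₂)), norm_sub_le (f (x₁, x₂)) (f (y₁, x₂)),
    h (x₁, x₂), h (y₁, x₂), h (x₁, y₂), h (y₁, y₂)]

lemma norm_doubleDiff_le_of_norm_sub_snd_le {x₂ y₂ : Y}
    (h : ∀ z₁, ‖f (z₁, x₂) - f (z₁, y₂)‖ ≤ M) (x₁ y₁ : X) :
    ‖doubleDiff f x₁ y₁ x₂ y₂‖ ≤ 2 * M := by
  rw [doubleDiff_eq_sub_snd]
  linarith [norm_sub_le (f (x₁, x₂) - f (x₁, y₂)) (f (y₁, x₂) - f (y₁, y₂)), h x₁, h y₁]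

lemma norm_doubleDiff_le_of_norm_sub_fst_le {x₁ y₁ : X}
    (h : ∀ z₂, ‖f (x₁, z₂) - f (y₁, z₂)‖ ≤ M) (x₂ y₂ : Y) :
    ‖doubleDiff f x₁ y₁ x₂ y₂‖ ≤ 2 * M := by
  rw [doubleDiff_eq_sub_fst]
  linarith [norm_sub_le (f (x₁, x₂) - f (y₁, x₂)) (f (x₁, y₂) - f (y₁, y₂)), h x₂, h y₂]

end NormDoubleDifference

lemma hasSum_ite_zpow {t r : ℝ} (c d : ℝ) (ht₀ : 0 < t) (ht₁ : t < 1) (hr : 1 < r) (j₀ : ℤ) :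
    HasSum (fun j : ℤ => if j₀ ≤ j then c * t ^ j else d * r ^ j)
      (c * t ^ j₀ / (1 - t) + d * r ^ j₀ / (r - 1)) := by
  have hr₀ : r ≠ 0 := by positivity
  rw [← (Equiv.addLeft j₀).hasSum_iff]
  apply HasSum.of_nat_of_neg_add_one
  · rw [div_eq_mul_inv]
    refine ((hasSum_geometric_of_lt_one ht₀.le ht₁).mul_left (c * t ^ j₀)).congr_fun fun n => ?_
    simp [zpow_add₀ ht₀.ne', mul_assoc]
  · have hsum : d * r ^ j₀ / (r - 1) = d * r ^ j₀ * r⁻¹ * (1 - r⁻¹)⁻¹ := by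
      have : r - 1 ≠ 0 := by linarith
      field_simp
    rw [hsum]
    refine ((hasSum_geometric_of_lt_one (by positivity) (inv_lt_one_of_one_lt₀ hr)).mul_left
      (d * r ^ j₀ * r⁻¹)).congr_fun fun n => ?_
    change (if j₀ ≤ j₀ + -((n : ℤ) + 1) then c * t ^ (j₀ + -((n : ℤ) + 1))
      else d * r ^ (j₀ + -((n : ℤ) + 1))) = _
    rw [if_neg (by omega), zpow_add₀ hr₀, zpow_neg, zpow_add_one₀ hr₀, zpow_natCast, inv_pow]
    field_simp

/-- The bound for the `j`-th term of a difference in one variable at distance `u ≈ 2^{-j₀}`: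
the size bound for `j ≥ j₀`, the Hölder bound for `j < j₀`. -/
noncomputable def scaleWeight (s β u : ℝ) (j₀ j : ℤ) : ℝ :=
  if j₀ ≤ j then 2 * 2 ^ (-(j : ℝ) * s) else u ^ β * 2 ^ ((j : ℝ) * (β - s))

noncomputable def scaleWeightConst (s β : ℝ) : ℝ :=
  2 / (1 - 2 ^ (-s)) + 2 ^ (β - s) / (2 ^ (β - s) - 1)

section ScaleWeight

variable {s β u : ℝ}

lemma scaleWeight_nonneg (hu : 0 ≤ u) (j₀ j : ℤ) : 0 ≤ scaleWeight s β u j₀ j := by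
  unfold scaleWeight; split_ifs <;> positivity

lemma scaleWeight_eq_ite_zpow (j₀ : ℤ) :
    scaleWeight s β u j₀ =
      fun j => if j₀ ≤ j then 2 * (2 ^ (-s)) ^ j else u ^ β * (2 ^ (β - s)) ^ j := by
  funext j
  rw [scaleWeight, show -(j : ℝ) * s = -s * j by ring, show (j : ℝ) * (β - s) = (β - s) * j by ring,
    Real.rpow_mul_intCast zero_le_two, Real.rpow_mul_intCast zero_le_two]

lemma two_rpow_neg_lt_one (hs : 0 < s) : (2 : ℝ) ^ (-s) < 1 :=
  Real.rpow_lt_one_of_one_lt_of_neg one_lt_two (neg_neg_of_pos hs)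

lemma one_lt_two_rpow_sub (hsβ : s < β) : 1 < (2 : ℝ) ^ (β - s) :=
  Real.one_lt_rpow one_lt_two (sub_pos.2 hsβ)

lemma scaleWeightConst_pos (hs : 0 < s) (hsβ : s < β) : 0 < scaleWeightConst s β := by
  have ht : 0 < 1 - (2 : ℝ) ^ (-s) := sub_pos.2 (two_rpow_neg_lt_one hs)
  have hr : 0 < (2 : ℝ) ^ (β - s) - 1 := sub_pos.2 (one_lt_two_rpow_sub hsβ)
  unfold scaleWeightConst
  positivity

lemma hasSum_scaleWeight (hs : 0 < s) (hsβ : s < β) (j₀ : ℤ) :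
    HasSum (scaleWeight s β u j₀) (2 * (2 ^ (-s)) ^ j₀ / (1 - 2 ^ (-s)) +
      u ^ β * (2 ^ (β - s)) ^ j₀ / (2 ^ (β - s) - 1)) := by
  rw [scaleWeight_eq_ite_zpow]
  exact hasSum_ite_zpow _ _ (by positivity) (two_rpow_neg_lt_one hs) (one_lt_two_rpow_sub hsβ) j₀

lemma summable_scaleWeight (hs : 0 < s) (hsβ : s < β) (j₀ : ℤ) :
    Summable (scaleWeight s β u j₀) :=
  (hasSum_scaleWeight hs hsβ j₀).summable

lemma tsum_scaleWeight_le (hs : 0 < s) (hsβ : s < β) {j₀ : ℤ}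
    (hu : (2 : ℝ) ^ (-(j₀ : ℝ)) ≤ u) (hu' : u ≤ (2 : ℝ) ^ (-(j₀ : ℝ) + 1)) :
    ∑' j, scaleWeight s β u j₀ j ≤ scaleWeightConst s β * u ^ s := by
  have hu₀ : 0 < u := (by positivity : (0 : ℝ) < 2 ^ (-(j₀ : ℝ))).trans_le hu
  have ht : 0 < 1 - (2 : ℝ) ^ (-s) := sub_pos.2 (two_rpow_neg_lt_one hs)
  have hr : 0 < (2 : ℝ) ^ (β - s) - 1 := sub_pos.2 (one_lt_two_rpow_sub hsβ)
  have hsmall : ((2 : ℝ) ^ (-s)) ^ j₀ ≤ u ^ s := by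
    rw [← Real.rpow_mul_intCast zero_le_two, show -s * j₀ = -(j₀ : ℝ) * s by ring,
      Real.rpow_mul zero_le_two]
    exact Real.rpow_le_rpow (by positivity) hu hs.le
  have hscale : u * 2 ^ (j₀ : ℝ) ≤ 2 := by
    calc u * 2 ^ (j₀ : ℝ) ≤ 2 ^ (-(j₀ : ℝ) + 1) * 2 ^ (j₀ : ℝ) := by gcongr
      _ = 2 := by rw [← Real.rpow_add two_pos]; norm_num
  have hlarge : u ^ β * ((2 : ℝ) ^ (β - s)) ^ j₀ ≤ 2 ^ (β - s) * u ^ s := by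
    calc u ^ β * ((2 : ℝ) ^ (β - s)) ^ j₀ = u ^ s * (u * 2 ^ (j₀ : ℝ)) ^ (β - s) := by
          rw [← Real.rpow_mul_intCast zero_le_two, mul_comm (β - s), Real.rpow_mul zero_le_two,
            Real.mul_rpow hu₀.le (by positivity), ← mul_assoc, ← Real.rpow_add hu₀]
          ring_nf
      _ ≤ u ^ s * 2 ^ (β - s) := by gcongr
      _ = 2 ^ (β - s) * u ^ s := mul_comm _ _
  rw [(hasSum_scaleWeight hs hsβ j₀).tsum_eq]
  calc _ ≤ 2 * u ^ s / (1 - 2 ^ (-s)) + 2 ^ (β - s) * u ^ s / (2 ^ (β - s) - 1) := by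
        gcongr
    _ = scaleWeightConst s β * u ^ s := by unfold scaleWeightConst; ring

end ScaleWeight

lemma norm_doubleDiff_le_scaleWeight {X Y F : Type*} [SeminormedAddCommGroup X]
    [SeminormedAddCommGroup Y] [SeminormedAddCommGroup F] {s β A : ℝ} {G : ℤ → ℤ → X × Y → F}
    (hG : ∀ j k x, ‖G j k x‖ ≤ A * (2 : ℝ) ^ (-((j : ℝ) + (k : ℝ)) * s))
    (hG₂ : ∀ (j k : ℤ) z₁ (z₂ w₂ : Y), ‖G j k (z₁, z₂) - G j k (z₁, w₂)‖ ≤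
      A * (2 : ℝ) ^ (-(j : ℝ) * s) * (2 : ℝ) ^ ((k : ℝ) * (β - s)) * ‖z₂ - w₂‖ ^ β)
    (hG₁ : ∀ (j k : ℤ) (z₁ w₁ : X) z₂, ‖G j k (z₁, z₂) - G j k (w₁, z₂)‖ ≤
      A * (2 : ℝ) ^ ((j : ℝ) * (β - s)) * (2 : ℝ) ^ (-(k : ℝ) * s) * ‖z₁ - w₁‖ ^ β)
    (hG₁₂ : ∀ (j k : ℤ) (z₁ w₁ : X) (z₂ w₂ : Y), ‖doubleDiff (G j k) z₁ w₁ z₂ w₂‖ ≤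
      A * (2 : ℝ) ^ (((j : ℝ) + (k : ℝ)) * (β - s)) * ‖z₁ - w₁‖ ^ β * ‖z₂ - w₂‖ ^ β)
    (j₀ k₀ j k : ℤ) (x₁ y₁ : X) (x₂ y₂ : Y) :
    ‖doubleDiff (G j k) x₁ y₁ x₂ y₂‖ ≤
      A * (scaleWeight s β ‖x₁ - y₁‖ j₀ j * scaleWeight s β ‖x₂ - y₂‖ k₀ k) := by
  unfold scaleWeight
  split_ifs
  · have h := norm_doubleDiff_le_of_norm_le (hG j k) x₁ y₁ x₂ y₂
    rw [show -((j : ℝ) + k) * s = -j * s + -k * s by ring, Real.rpow_add two_pos] at h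
    linarith
  · have h := norm_doubleDiff_le_of_norm_sub_snd_le (fun z₁ => hG₂ j k z₁ x₂ y₂) x₁ y₁
    linarith
  · have h := norm_doubleDiff_le_of_norm_sub_fst_le (fun z₂ => hG₁ j k x₁ y₁ z₂) x₂ y₂
    linarith
  · have h := hG₁₂ j k x₁ y₁ x₂ y₂
    rw [show ((j : ℝ) + k) * (β - s) = j * (β - s) + k * (β - s) by ring,
      Real.rpow_add two_pos] at h
    linarith

theorem tb_product_double_difference_summation
    (s β : ℝ) (hs : 0 < s) (hsβ : s < β) :
    ∃ C : ℝ, 0 < C ∧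
      ∀ (n m : ℕ) (A : ℝ) (G : ℤ → ℤ → E n × E m → ℂ) (j₀ k₀ : ℤ)
        (x₁ y₁ : E n) (x₂ y₂ : E m),
        (∀ (j k : ℤ) (x : E n × E m),
          ‖G j k x‖ ≤ A * (2:ℝ) ^ (-((j:ℝ) + (k:ℝ)) * s)) →
        (∀ (j k : ℤ) (z₁ : E n) (z₂ w₂ : E m),
          ‖G j k (z₁, z₂) - G j k (z₁, w₂)‖ ≤
            A * (2:ℝ) ^ (-(j:ℝ) * s) * (2:ℝ) ^ ((k:ℝ) * (β - s)) * ‖z₂ - w₂‖ ^ β) →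
        (∀ (j k : ℤ) (z₁ w₁ : E n) (z₂ : E m),
          ‖G j k (z₁, z₂) - G j k (w₁, z₂)‖ ≤
            A * (2:ℝ) ^ ((j:ℝ) * (β - s)) * (2:ℝ) ^ (-(k:ℝ) * s) * ‖z₁ - w₁‖ ^ β) →
        (∀ (j k : ℤ) (z₁ w₁ : E n) (z₂ w₂ : E m),
          ‖G j k (z₁, z₂) - G j k (w₁, z₂) - G j k (z₁, w₂) + G j k (w₁, w₂)‖ ≤
            A * (2:ℝ) ^ (((j:ℝ) + (k:ℝ)) * (β - s)) * ‖z₁ - w₁‖ ^ β * ‖z₂ - w₂‖ ^ β) →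
        (2:ℝ) ^ (-(j₀:ℝ)) ≤ ‖x₁ - y₁‖ → ‖x₁ - y₁‖ ≤ (2:ℝ) ^ (-(j₀:ℝ) + 1) →
        (2:ℝ) ^ (-(k₀:ℝ)) ≤ ‖x₂ - y₂‖ → ‖x₂ - y₂‖ ≤ (2:ℝ) ^ (-(k₀:ℝ) + 1) →
        ‖∑' p : ℤ × ℤ,
            (G p.1 p.2 (x₁, x₂) - G p.1 p.2 (y₁, x₂) -
              G p.1 p.2 (x₁, y₂) + G p.1 p.2 (y₁, y₂))‖ ≤
          C * A * ‖x₁ - y₁‖ ^ s * ‖x₂ - y₂‖ ^ s := by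
  have hC := scaleWeightConst_pos hs hsβ
  refine ⟨scaleWeightConst s β ^ 2, by positivity, ?_⟩
  intro n m A G j₀ k₀ x₁ y₁ x₂ y₂ hG hG₂ hG₁ hG₁₂ hu hu' hv hv'
  set a := scaleWeight s β ‖x₁ - y₁‖ j₀
  set b := scaleWeight s β ‖x₂ - y₂‖ k₀
  have hA : 0 ≤ A := by simpa using (norm_nonneg _).trans (hG 0 0 (x₁, x₂))
  have ha : Summable a := summable_scaleWeight hs hsβ j₀
  have hb : Summable b := summable_scaleWeight hs hsβ k₀
  have ha₀ : 0 ≤ a := scaleWeight_nonneg (norm_nonneg _) j₀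
  have hb₀ : 0 ≤ b := scaleWeight_nonneg (norm_nonneg _) k₀
  have hab : HasSum (fun p : ℤ × ℤ => A * (a p.1 * b p.2)) (A * ((∑' j, a j) * ∑' k, b k)) :=
    (ha.hasSum.mul hb.hasSum (ha.mul_of_nonneg hb ha₀ hb₀)).mul_left A
  calc _ ≤ A * ((∑' j, a j) * ∑' k, b k) := tsum_of_norm_bounded hab fun p =>
        norm_doubleDiff_le_scaleWeight hG hG₂ hG₁ hG₁₂ j₀ k₀ p.1 p.2 x₁ y₁ x₂ y₂
    _ ≤ A * ((scaleWeightConst s β * ‖x₁ - y₁‖ ^ s) * (scaleWeightConst s β * ‖x₂ - y₂‖ ^ s)) :=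
        mul_le_mul_of_nonneg_left (mul_le_mul (tsum_scaleWeight_le hs hsβ hu hu')
          (tsum_scaleWeight_le hs hsβ hv hv') (tsum_nonneg hb₀) (by positivity)) hA
    _ = _ := by ring
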